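/- arXiv:0909.5313 — 2 statements merged into one kernel-verified Lean document; each statement's English description precedes it below -/
import Mathlib

section
/- Let G be a finite abelian group with |G| ≥ 2 and let c > 0 be a real constant. Then for all sufficiently large n the following holds: if S is a nonempty finite multiset of elements of G^n that is symmetric and (1/(2n^{20c}))-biased (for every nontrivial character χ of G^n, |∑_{s∈S} χ(s)| ≤ |S|/(2n^{20c})), then for every subgroup H of G^n with |H| ≤ |G|^{n/2}, there exists an element s of S with Hamming distance Δ(s,h) > c·log₂ n for every h ∈ H. -/
/-!
Suppose every `s ∈ S` lies within Hamming distance `D = ⌊c log₂ n⌋` of some point of `H`. For a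
set `T` of `m ≥ n/2 + t` coordinates, the points agreeing with a point of `H` on `T` form a
subgroup `H.agreeOn T` of index at least `2^t`, and orthogonality of the characters of the
quotient shows that an `ε`-biased multiset puts at most a `1/k + ε` fraction of its mass in a
subgroup of index `k`. Each `s` agrees with its nearby point of `H` on at least `C(n - D, m)` of
the `m`-sets, so double counting gives `C(n - D, m) ≤ C(n, m) (2^{-t} + ε)`. Since
`C(n, m) ≤ 4^D C(n - D, m)` for `m` below `3n/4`, the choice `t = 2D + 2` and
`ε = 1 / (2 n^{20c}) ≤ 4^{-D} / 2` makes the right-hand side at most `3/4 · C(n - D, m)`.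
-/

open Finset Filter Real

lemma Multiset.sum_map_ite_eq_countP_mul {α R : Type*} [NonAssocSemiring R] (S : Multiset α)
    (p : α → Prop) [DecidablePred p] (z : R) :
    (S.map (fun s => if p s then z else 0)).sum = S.countP p * z := by
  induction S using Multiset.induction_on with
  | empty => simp
  | cons a S ih => by_cases h : p a <;> simp [h, ih, add_mul, add_comm]

theorem Multiset.card_nsmul_le_sum_countP {α κ : Type*} (S : Multiset α) (𝒯 : Finset κ)
    (p : κ → α → Prop) [∀ T, DecidablePred (p T)] {a : ℕ}
    (h : ∀ s ∈ S, a ≤ #{T ∈ 𝒯 | p T s}) :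
    S.card * a ≤ ∑ T ∈ 𝒯, S.countP (p T) := by
  have hswap : ∑ T ∈ 𝒯, S.countP (p T) = (S.map fun s => #{T ∈ 𝒯 | p T s}).sum := by
    simp only [card_filter, Multiset.sum_map_sum]
    refine sum_congr rfl fun T _ => ?_
    rw [Multiset.sum_map_ite_eq_countP_mul, Nat.cast_id, mul_one]
  rw [hswap, ← smul_eq_mul, ← S.card_map fun s => #{T ∈ 𝒯 | p T s}]
  exact Multiset.card_nsmul_le_sum (by simpa using h)

def Multiset.IsBiased {A : Type*} [CommGroup A] (S : Multiset A) (ε : ℝ) : Prop :=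
  ∀ χ : A →* ℂ, (∀ x, ‖χ x‖ = 1) → χ ≠ 1 → ‖(S.map χ).sum‖ ≤ ε * S.card

section Characters

variable {A : Type*} [CommGroup A]

/- Characters of the quotient are taken as `AddChar`s of `Additive (A ⧸ M)` because that is where
Mathlib's orthogonality relation `AddChar.sum_apply_eq_ite` lives. -/
@[simps]
def Subgroup.pullbackChar (M : Subgroup A) (ψ : AddChar (Additive (A ⧸ M)) ℂ) : A →* ℂ where
  toFun a := ψ (.ofMul a)
  map_one' := ψ.map_zero_eq_one
  map_mul' a b := ψ.map_add_eq_mul (.ofMul a) (.ofMul b)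

lemma Subgroup.pullbackChar_eq_one_iff (M : Subgroup A) (ψ : AddChar (Additive (A ⧸ M)) ℂ) :
    M.pullbackChar ψ = 1 ↔ ψ = 1 := by
  refine ⟨fun h => ?_, by rintro rfl; rfl⟩
  ext q
  obtain ⟨a, rfl⟩ := QuotientGroup.mk_surjective q.toMul
  exact DFunLike.congr_fun h a

variable [Finite A]

lemma norm_apply_eq_one_of_finite (χ : A →* ℂ) (x : A) : ‖χ x‖ = 1 :=
  Complex.norm_eq_one_of_pow_eq_one (by rw [← map_pow, pow_card_eq_one', map_one])
    Nat.card_pos.ne'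

lemma Subgroup.sum_pullbackChar_sum (M : Subgroup A) [DecidablePred (· ∈ M)] (S : Multiset A) :
    ∑ ψ : AddChar (Additive (A ⧸ M)) ℂ, (S.map (M.pullbackChar ψ)).sum =
      S.countP (· ∈ M) * M.index := by
  classical
  have : Fintype (A ⧸ M) := Fintype.ofFinite _
  simp only [← Multiset.sum_map_sum, Subgroup.pullbackChar_apply, AddChar.sum_apply_eq_ite,
    ofMul_eq_zero, QuotientGroup.eq_one_iff, Multiset.sum_map_ite_eq_countP_mul]
  rw [Subgroup.index, Nat.card_eq_fintype_card, Fintype.card_additive]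

theorem Multiset.IsBiased.countP_mem_le {S : Multiset A} {ε : ℝ} (hS : S.IsBiased ε)
    (hε : 0 ≤ ε) (M : Subgroup A) [DecidablePred (· ∈ M)] :
    (S.countP (· ∈ M) : ℝ) ≤ S.card * ((M.index : ℝ)⁻¹ + ε) := by
  set δ := ε * S.card
  have hδ : 0 ≤ δ := by positivity
  have : Fintype (A ⧸ M) := Fintype.ofFinite _
  have hindex : (0 : ℝ) < M.index := by exact_mod_cast Nat.card_pos (α := A ⧸ M)
  have hcard : Fintype.card (AddChar (Additive (A ⧸ M)) ℂ) = M.index := by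
    rw [AddChar.card_eq, Fintype.card_additive, Subgroup.index, Nat.card_eq_fintype_card]
  have htrivial : ‖(S.map (M.pullbackChar 1)).sum‖ = S.card := by
    simp [(M.pullbackChar_eq_one_iff 1).mpr rfl]
  have hnontrivial : ∑ ψ ∈ univ.erase 1, ‖(S.map (M.pullbackChar ψ)).sum‖ ≤ M.index * δ := by
    calc ∑ ψ ∈ univ.erase 1, ‖(S.map (M.pullbackChar ψ)).sum‖
        ≤ (univ.erase (1 : AddChar (Additive (A ⧸ M)) ℂ)).card • δ :=
          Finset.sum_le_card_nsmul _ _ _ fun ψ hψ => hS _ (norm_apply_eq_one_of_finite _)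
            ((M.pullbackChar_eq_one_iff ψ).not.mpr (ne_of_mem_erase hψ))
      _ ≤ M.index * δ := by
          rw [nsmul_eq_mul, ← hcard]
          gcongr
          exact_mod_cast card_erase_le
  have key : (S.countP (· ∈ M) : ℝ) * M.index ≤ S.card + M.index * δ :=
    calc (S.countP (· ∈ M) : ℝ) * M.index
        = ‖∑ ψ : AddChar (Additive (A ⧸ M)) ℂ, (S.map (M.pullbackChar ψ)).sum‖ := by
          rw [M.sum_pullbackChar_sum]; norm_cast
      _ ≤ ∑ ψ : AddChar (Additive (A ⧸ M)) ℂ, ‖(S.map (M.pullbackChar ψ)).sum‖ :=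
          norm_sum_le _ _
      _ = ‖(S.map (M.pullbackChar 1)).sum‖
            + ∑ ψ ∈ univ.erase 1, ‖(S.map (M.pullbackChar ψ)).sum‖ :=
          (add_sum_erase _ _ (mem_univ 1)).symm
      _ ≤ S.card + M.index * δ := by rw [htrivial]; gcongr
  rw [mul_add, ← div_eq_mul_inv, div_add' _ _ _ hindex.ne', le_div_iff₀ hindex]
  linarith

end Characters

section Restriction

variable {ι G : Type*} [Group G]

def Pi.restrictHom (T : Set ι) : (ι → G) →* (T → G) :=
  MonoidHom.pi fun i : T => Pi.evalMonoidHom (fun _ => G) (i : ι)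

@[simp] lemma Pi.restrictHom_apply (T : Set ι) (x : ι → G) (i : T) :
    Pi.restrictHom T x i = x i := rfl

lemma Pi.restrictHom_surjective (T : Set ι) :
    Function.Surjective (Pi.restrictHom (G := G) T) := by
  classical
  intro f
  refine ⟨fun i => if h : i ∈ T then f ⟨i, h⟩ else 1, funext fun i => ?_⟩
  simp [i.2]

def Subgroup.agreeOn (H : Subgroup (ι → G)) (T : Finset ι) : Subgroup (ι → G) :=
  (H.map (Pi.restrictHom (T : Set ι))).comap (Pi.restrictHom (T : Set ι))

lemma Subgroup.mem_agreeOn_of_eqOn {H : Subgroup (ι → G)} {T : Finset ι} {x h : ι → G}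
    (hh : h ∈ H) (hxh : Set.EqOn x h T) : x ∈ H.agreeOn T :=
  ⟨h, hh, funext fun i => (hxh i.2).symm⟩

lemma Subgroup.card_pi_le_card_mul_index_agreeOn (H : Subgroup (ι → G)) [Finite H] (T : Finset ι) :
    Nat.card (T → G) ≤ Nat.card H * (H.agreeOn T).index := by
  rw [Subgroup.agreeOn, Subgroup.index_comap_of_surjective _ (Pi.restrictHom_surjective _),
    ← Subgroup.card_mul_index]
  gcongr
  exact Nat.card_le_card_of_surjective _ ((Pi.restrictHom T).subgroupMap_surjective H)

end Restriction

theorem Nat.choose_succ_le_four_mul {k m : ℕ} (h : 4 * m ≤ 3 * (k + 1)) :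
    (k + 1).choose m ≤ 4 * k.choose m := by
  have hm : k + 1 ≤ 4 * (k + 1 - m) := by omega
  refine Nat.le_of_mul_le_mul_right ?_ k.succ_pos
  calc (k + 1).choose m * (k + 1) ≤ (k + 1).choose m * (4 * (k + 1 - m)) := by gcongr
    _ = 4 * k.choose m * (k + 1) := by rw [mul_left_comm, ← Nat.choose_mul_succ_eq]; ring

theorem Nat.choose_add_le_four_pow_mul {k m : ℕ} (h : 4 * m ≤ 3 * (k + 1)) (D : ℕ) :
    (k + D).choose m ≤ 4 ^ D * k.choose m := by
  induction D with
  | zero => simp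
  | succ D ih =>
    calc (k + D + 1).choose m ≤ 4 * (k + D).choose m := Nat.choose_succ_le_four_mul (by omega)
      _ ≤ 4 * (4 ^ D * k.choose m) := by gcongr
      _ = 4 ^ (D + 1) * k.choose m := by ring

/- With `D = ⌊c log₂ n⌋`, `11 D + 8 ≤ n` is what makes `m = ⌈n/2⌉ + 2D + 2` satisfy
`4 m ≤ 3 (n - D + 1)`. -/
theorem eventually_floor_logb_le (c : ℝ) :
    ∀ᶠ n : ℕ in atTop, 11 * ⌊c * logb 2 n⌋₊ + 8 ≤ n := by
  have hlog : (fun x => c * logb 2 x) =o[atTop] id :=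
    (isLittleO_log_id_atTop.const_mul_left (c / log 2)).congr_left fun x => by
      rw [logb]; ring
  filter_upwards [tendsto_natCast_atTop_atTop.eventually (hlog.bound (c := 1 / 22) (by norm_num)),
    eventually_ge_atTop 16] with n hn h16
  have h16' : (16 : ℝ) ≤ n := by exact_mod_cast h16
  have hfloor : (⌊c * logb 2 n⌋₊ : ℝ) ≤ |c * logb 2 n| :=
    (Nat.floor_le (abs_nonneg _)).trans' (by exact_mod_cast Nat.floor_le_floor (le_abs_self _))
  simp only [norm_eq_abs, id, Nat.abs_cast] at hn
  exact_mod_cast (show (11 * ⌊c * logb 2 n⌋₊ + 8 : ℝ) ≤ n by linarith)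

theorem four_pow_floor_logb_le {c x : ℝ} (hc : 0 ≤ c) (hx : 1 ≤ x) :
    (4 : ℝ) ^ ⌊c * logb 2 x⌋₊ ≤ x ^ (2 * c) := by
  have hD : (⌊c * logb 2 x⌋₊ : ℝ) ≤ c * logb 2 x :=
    Nat.floor_le (mul_nonneg hc (logb_nonneg one_lt_two hx))
  calc (4 : ℝ) ^ ⌊c * logb 2 x⌋₊ = ((2 : ℝ) ^ (⌊c * logb 2 x⌋₊ : ℝ)) ^ 2 := by
        rw [rpow_natCast, ← pow_mul, pow_mul']; norm_num
    _ ≤ ((2 : ℝ) ^ (c * logb 2 x)) ^ 2 := by gcongr; norm_num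
    _ = x ^ (2 * c) := by
        rw [mul_comm c, rpow_mul zero_le_two, rpow_logb zero_lt_two one_lt_two.ne' (by linarith),
          ← rpow_natCast, ← rpow_mul (by linarith), mul_comm]; norm_num

theorem four_pow_floor_logb_mul_lt_one {c x : ℝ} (hc : 0 ≤ c) (hx : 1 ≤ x) :
    4 ^ ⌊c * logb 2 x⌋₊ * ((2 ^ (2 * ⌊c * logb 2 x⌋₊ + 2))⁻¹ + (2 * x ^ (20 * c))⁻¹) < 1 := by
  set D := ⌊c * logb 2 x⌋₊
  have hpow : 0 < x ^ (20 * c) := by positivity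
  have h4 : (4 : ℝ) ^ D ≤ x ^ (20 * c) :=
    (four_pow_floor_logb_le hc hx).trans (rpow_le_rpow_of_exponent_le hx (by linarith))
  calc (4 : ℝ) ^ D * ((2 ^ (2 * D + 2))⁻¹ + (2 * x ^ (20 * c))⁻¹)
      = 1 / 4 + 4 ^ D / (2 * x ^ (20 * c)) := by
        rw [show (2 : ℝ) ^ (2 * D + 2) = 4 ^ D * 4 by rw [pow_add, pow_mul]; norm_num]
        field_simp
    _ ≤ 1 / 4 + x ^ (20 * c) / (2 * x ^ (20 * c)) := by gcongr
    _ < 1 := by field_simp; norm_num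

section HammingBall

variable {ι G : Type*} [Fintype ι] [Group G]

lemma Subgroup.two_pow_le_index_agreeOn [Fintype G] (hG : 2 ≤ Fintype.card G)
    (H : Subgroup (ι → G)) {r : ℝ} (hH : (Nat.card H : ℝ) ≤ (Fintype.card G : ℝ) ^ r)
    (T : Finset ι) {t : ℕ} (hT : r + t ≤ #T) :
    (2 : ℝ) ^ t ≤ (H.agreeOn T).index := by
  set q : ℝ := (Fintype.card G : ℝ)
  have hq : (2 : ℝ) ≤ q := Nat.ofNat_le_cast.mpr hG
  have hcard : q ^ (#T : ℝ) ≤ q ^ r * (H.agreeOn T).index := by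
    calc q ^ (#T : ℝ) = Nat.card (T → G) := by simp [q, rpow_natCast, Nat.card_fun]
      _ ≤ Nat.card H * (H.agreeOn T).index := by
          exact_mod_cast H.card_pi_le_card_mul_index_agreeOn T
      _ ≤ q ^ r * (H.agreeOn T).index := by gcongr
  have hqr : 0 < q ^ r := by positivity
  calc (2 : ℝ) ^ t ≤ q ^ (t : ℝ) := by rw [rpow_natCast]; gcongr
    _ ≤ (H.agreeOn T).index := by
        refine le_of_mul_le_mul_left ?_ hqr
        rw [← rpow_add (by linarith)]
        exact (rpow_le_rpow_of_exponent_le (by linarith) (by linarith)).trans hcard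

variable [DecidableEq G]

open scoped Classical in
lemma Subgroup.choose_le_card_filter_mem_agreeOn {H : Subgroup (ι → G)} {x h : ι → G}
    (hh : h ∈ H) {D : ℕ} (hD : hammingDist x h ≤ D) (m : ℕ) :
    (Fintype.card ι - D).choose m ≤ #{T ∈ powersetCard m univ | x ∈ H.agreeOn T} := by
  set agree : Finset ι := {i | x i = h i}
  have hagree : Fintype.card ι - D ≤ #agree := by
    have : #agree + hammingDist x h = Fintype.card ι :=
      card_filter_add_card_filter_not (fun i => x i = h i)
    omega
  calc (Fintype.card ι - D).choose m ≤ (#agree).choose m := Nat.choose_le_choose m hagree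
    _ = #(powersetCard m agree) := (card_powersetCard m agree).symm
    _ ≤ #{T ∈ powersetCard m univ | x ∈ H.agreeOn T} := by
        refine card_le_card fun T hT => ?_
        rw [mem_powersetCard] at hT
        refine mem_filter.mpr ⟨mem_powersetCard.mpr ⟨subset_univ T, hT.2⟩, ?_⟩
        exact mem_agreeOn_of_eqOn hh fun i hi => (mem_filter.mp (hT.1 hi)).2

end HammingBall

theorem Multiset.IsBiased.exists_forall_lt_hammingDist {ι G : Type*} [Fintype ι] [CommGroup G]
    [Fintype G] [DecidableEq G] (hG : 2 ≤ Fintype.card G) {S : Multiset (ι → G)} (hS : S ≠ 0)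
    {ε : ℝ} (hε : 0 ≤ ε) (hbiased : S.IsBiased ε) (H : Subgroup (ι → G))
    (hH : (Nat.card H : ℝ) ≤ (Fintype.card G : ℝ) ^ ((Fintype.card ι : ℝ) / 2))
    {D t m : ℕ} (hD : D ≤ Fintype.card ι) (hm : Fintype.card ι + 2 * t ≤ 2 * m)
    (hmD : 4 * m ≤ 3 * (Fintype.card ι - D + 1)) (hsmall : 4 ^ D * ((2 ^ t)⁻¹ + ε) < 1) :
    ∃ s ∈ S, ∀ h ∈ H, D < hammingDist s h := by
  classical
  by_contra! hclose
  set n := Fintype.card ι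
  set 𝒯 := Finset.powersetCard m (univ : Finset ι)
  have hcount (T : Finset ι) (hT : T ∈ 𝒯) :
      (S.countP (· ∈ H.agreeOn T) : ℝ) ≤ S.card * ((2 ^ t)⁻¹ + ε) := by
    have hmR : (n : ℝ) + 2 * t ≤ 2 * m := by exact_mod_cast hm
    have hindex := H.two_pow_le_index_agreeOn hG hH T (t := t)
      (by rw [(Finset.mem_powersetCard.mp hT).2]; linarith)
    refine (hbiased.countP_mem_le hε _).trans ?_
    gcongr
  have hcover (s : ι → G) (hs : s ∈ S) : (n - D).choose m ≤ #{T ∈ 𝒯 | s ∈ H.agreeOn T} := by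
    obtain ⟨h, hh, hsh⟩ := hclose s hs
    exact Subgroup.choose_le_card_filter_mem_agreeOn hh hsh m
  have hbinom : n.choose m ≤ 4 ^ D * (n - D).choose m := by
    simpa [Nat.sub_add_cancel hD] using Nat.choose_add_le_four_pow_mul hmD D
  have hpos : (0 : ℝ) < S.card * (n - D).choose m := by
    have : 0 < (n - D).choose m := Nat.choose_pos (by omega)
    have : 0 < S.card := Multiset.card_pos.mpr hS
    positivity
  have : (S.card * (n - D).choose m : ℝ) ≤ S.card * (n - D).choose m * (4 ^ D * ((2 ^ t)⁻¹ + ε)) :=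
    calc (S.card * (n - D).choose m : ℝ)
        ≤ ∑ T ∈ 𝒯, (S.countP (· ∈ H.agreeOn T) : ℝ) := by
          exact_mod_cast S.card_nsmul_le_sum_countP 𝒯 _ hcover
      _ ≤ #𝒯 • (S.card * ((2 ^ t)⁻¹ + ε)) := Finset.sum_le_card_nsmul _ _ _ hcount
      _ = n.choose m * (S.card * ((2 ^ t)⁻¹ + ε)) := by
          rw [nsmul_eq_mul, Finset.card_powersetCard, Finset.card_univ]
      _ ≤ 4 ^ D * (n - D).choose m * (S.card * ((2 ^ t)⁻¹ + ε)) := by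
          gcongr
          exact_mod_cast hbinom
      _ = S.card * (n - D).choose m * (4 ^ D * ((2 ^ t)⁻¹ + ε)) := by ring
  nlinarith

theorem biased_set_contains_remote_point
    (G : Type) [CommGroup G] [Fintype G] [DecidableEq G]
    (hG : 2 ≤ Fintype.card G)
    (c : ℝ) (hc : 0 < c) :
    ∃ N : ℕ, ∀ n : ℕ, N ≤ n →
      ∀ S : Multiset (Fin n → G), S ≠ 0 →
        S.map (fun s => s⁻¹) = S →
        (∀ χ : (Fin n → G) →* ℂ, (∀ x, ‖χ x‖ = 1) → χ ≠ 1 →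
          ‖(S.map (fun s => χ s)).sum‖ ≤ (S.card : ℝ) / (2 * (n : ℝ) ^ (20 * c))) →
        ∀ H : Subgroup (Fin n → G),
          (Nat.card H : ℝ) ≤ (Fintype.card G : ℝ) ^ ((n : ℝ) / 2) →
          ∃ s ∈ S, ∀ h ∈ H, c * Real.logb 2 n < (hammingDist s h : ℝ) := by
  obtain ⟨N, hN⟩ := eventually_atTop.mp ((eventually_floor_logb_le c).and (eventually_ge_atTop 1))
  refine ⟨N, fun n hn S hS _ hbias H hH => ?_⟩
  obtain ⟨hnD, hn1⟩ := hN n hn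
  set D := ⌊c * logb 2 n⌋₊
  have hbiased : S.IsBiased (2 * (n : ℝ) ^ (20 * c))⁻¹ := fun χ hχ hχ1 =>
    (hbias χ hχ hχ1).trans_eq (by ring)
  obtain ⟨s, hs, hfar⟩ := hbiased.exists_forall_lt_hammingDist hG hS (by positivity) H
    (by simpa using hH) (D := D) (t := 2 * D + 2) (m := (n + 1) / 2 + (2 * D + 2))
    (by simp; omega) (by simp; omega) (by simp; omega)
    (four_pow_floor_logb_mul_lt_one hc.le (by exact_mod_cast hn1))
  exact ⟨s, hs, fun h hh => (Nat.lt_floor_add_one _).trans_le (by exact_mod_cast hfar h hh)⟩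
end

section
/- Let G be a finite group with |G| ≥ 2 and let c > 0 be a real constant. Then for all sufficiently large n the following holds: for every subgroup H of G^n with |H| ≤ |G|^{n/2}, there exists x ∈ G^n such that the Hamming distance Δ(x,h) > c·log₂ n for every h ∈ H. -/
/-!
A counting argument. A Hamming ball of radius `r` in `G^n` has at most `(n |G|)^r` points, since
each of its points is reached from the centre by `r` single-coordinate updates. Hence the balls of
radius `r = ⌊c log₂ n⌋` around the points of `H` cover at most `|G|^{n/2} (n |G|)^r` points, and
this is `< |G|^n` for large `n` because `r log (n |G|) = O(log² n)` is eventually below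
`(n/2) log |G|`. Some point is then left uncovered.
-/

open Real Filter Finset Topology

section HammingBall

variable {ι α : Type*} [Fintype ι] [DecidableEq ι]

theorem hammingDist_update_lt {β : ι → Type*} [∀ i, DecidableEq (β i)] {x y : ∀ i, β i} {i : ι}
    (hi : x i ≠ y i) : hammingDist (Function.update x i (y i)) y < hammingDist x y := by
  refine card_lt_card ((ssubset_iff_of_subset fun j => ?_).2 ⟨i, by simpa using hi, by simp⟩)
  rcases eq_or_ne j i with rfl | hj <;> simp_all

variable [Fintype α] [DecidableEq α]

theorem card_hammingBall_le [Nonempty ι] (h : ι → α) (r : ℕ) :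
    #{x | hammingDist x h ≤ r} ≤ (Fintype.card ι * Fintype.card α) ^ r := by
  induction r with
  | zero =>
    simpa using Finset.card_le_one.2 fun x hx y hy => by simp_all
  | succ r ih =>
    have hsub : ({x | hammingDist x h ≤ r + 1} : Finset (ι → α)) ⊆
        (({x | hammingDist x h ≤ r} : Finset (ι → α)) ×ˢ (univ : Finset (ι × α))).image
          fun p => Function.update p.1 p.2.1 p.2.2 := by
      intro x hx
      simp only [mem_filter, mem_univ, true_and] at hx
      simp only [mem_image, mem_product, mem_filter, mem_univ, true_and, and_true, Prod.exists]
      by_cases hxh : x = h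
      · obtain ⟨i⟩ := ‹Nonempty ι›
        exact ⟨h, i, h i, by simp, by simp [hxh]⟩
      · obtain ⟨i, hi⟩ := Function.ne_iff.1 hxh
        refine ⟨Function.update x i (h i), i, x i, ?_, by simp⟩
        have := hammingDist_update_lt hi
        omega
    calc #{x | hammingDist x h ≤ r + 1}
          ≤ #{x | hammingDist x h ≤ r} * #(univ : Finset (ι × α)) :=
          (card_le_card hsub).trans (card_image_le.trans (card_product _ _).le)
      _ ≤ (Fintype.card ι * Fintype.card α) ^ (r + 1) := by
          rw [card_univ, Fintype.card_prod, pow_succ]; gcongr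

theorem exists_forall_lt_hammingDist [Nonempty ι] (S : Finset (ι → α)) (r : ℕ)
    (hS : #S * (Fintype.card ι * Fintype.card α) ^ r < Fintype.card α ^ Fintype.card ι) :
    ∃ x : ι → α, ∀ h ∈ S, r < hammingDist x h := by
  by_contra! hcover
  have : (univ : Finset (ι → α)) ⊆ S.biUnion fun h => {x | hammingDist x h ≤ r} := by
    intro x _
    obtain ⟨h, hS, hx⟩ := hcover x
    exact mem_biUnion.2 ⟨h, hS, by simpa using hx⟩
  have := (card_le_card this).trans
    (card_biUnion_le_card_mul _ _ _ fun h _ => card_hammingBall_le h r)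
  rw [card_univ, Fintype.card_fun] at this
  omega

end HammingBall

theorem eventually_mul_log_sq_add_mul_log_lt (a b : ℝ) {ε : ℝ} (hε : 0 < ε) :
    ∀ᶠ x : ℝ in atTop, a * log x ^ 2 + b * log x < ε * x := by
  have h : Tendsto (fun x => (a * log x ^ 2 + b * log x) / x) atTop (𝓝 0) := by
    have h1 := tendsto_pow_log_div_mul_add_atTop 1 0 2 one_ne_zero
    have h2 := tendsto_pow_log_div_mul_add_atTop 1 0 1 one_ne_zero
    simpa [add_div, mul_div_assoc] using (h1.const_mul a).add (h2.const_mul b)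
  filter_upwards [h.eventually_lt_const hε, eventually_gt_atTop 0] with x hx hx0
  rwa [div_lt_iff₀ hx0] at hx

theorem eventually_rpow_half_mul_pow_floor_lt {q : ℝ} (hq : 1 < q) {c : ℝ} (hc : 0 < c) :
    ∀ᶠ n : ℕ in atTop, q ^ ((n : ℝ) / 2) * (n * q) ^ ⌊c * logb 2 n⌋₊ < q ^ n := by
  have hlogq : 0 < log q := log_pos hq
  have hev :=
    eventually_mul_log_sq_add_mul_log_lt (c / log 2) (c * log q / log 2) (half_pos hlogq)
  filter_upwards [tendsto_natCast_atTop_atTop.eventually hev, eventually_ge_atTop 1]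
    with n hn hn1
  have hn1 : (1 : ℝ) ≤ n := by exact_mod_cast hn1
  have hnq : 1 ≤ (n : ℝ) * q := one_le_mul_of_one_le_of_one_le hn1 hq.le
  have hs : (⌊c * logb 2 n⌋₊ : ℝ) ≤ c * logb 2 n :=
    Nat.floor_le (mul_nonneg hc.le (logb_nonneg one_lt_two hn1))
  have hexpand : log (n * q) * (c * logb 2 n) =
      c / log 2 * log n ^ 2 + c * log q / log 2 * log n := by
    rw [log_mul (by positivity) (by positivity), logb]; ring
  rw [← log_lt_log_iff (by positivity) (by positivity), log_mul (by positivity) (by positivity),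
    log_rpow (by positivity), log_pow, log_pow]
  linarith [mul_le_mul_of_nonneg_left hs (log_nonneg hnq)]

theorem remote_point_exists_general_group
    (G : Type) [Group G] [Fintype G] [DecidableEq G]
    (hG : 2 ≤ Fintype.card G)
    (c : ℝ) (hc : 0 < c) :
    ∃ N : ℕ, ∀ n : ℕ, N ≤ n →
      ∀ H : Subgroup (Fin n → G),
        (Nat.card H : ℝ) ≤ (Fintype.card G : ℝ) ^ ((n : ℝ) / 2) →
        ∃ x : Fin n → G, ∀ h ∈ H, c * Real.logb 2 n < (hammingDist x h : ℝ) := by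
  classical
  have hq : (1 : ℝ) < Fintype.card G := by exact_mod_cast hG
  obtain ⟨N, hN⟩ := ((eventually_rpow_half_mul_pow_floor_lt hq hc).and
    (eventually_ge_atTop 1)).exists_forall_of_atTop
  refine ⟨N, fun n hn H hH => ?_⟩
  obtain ⟨hbound, hn1⟩ := hN n hn
  have : Nonempty (Fin n) := ⟨⟨0, hn1⟩⟩
  have hcard : #(H : Set (Fin n → G)).toFinset * (Fintype.card (Fin n) * Fintype.card G) ^
      ⌊c * logb 2 n⌋₊ < Fintype.card G ^ Fintype.card (Fin n) := by
    rw [Set.toFinset_card, ← Nat.card_eq_fintype_card, Fintype.card_fin]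
    have : (Nat.card H : ℝ) * (n * Fintype.card G) ^ ⌊c * logb 2 n⌋₊ <
        (Fintype.card G : ℝ) ^ n :=
      (mul_le_mul_of_nonneg_right hH (by positivity)).trans_lt hbound
    exact_mod_cast this
  obtain ⟨x, hx⟩ := exists_forall_lt_hammingDist _ _ hcard
  refine ⟨x, fun h hh => (Nat.lt_floor_add_one _).trans_le ?_⟩
  exact_mod_cast hx h (Set.mem_toFinset.2 hh)
end
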